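/- arXiv:math/0402379 — 4 statements merged into one kernel-verified Lean document; each statement's English description precedes it below -/
import Mathlib

section
/- Let {M_j}_{j≥1} be a sequence of positive numbers such that the sequence j ↦ M_j^{1/j} is increasing and M_j^{1/j} > j for all j. If f belongs to the class C^#{M_j} on an interval [a,b] and g: [α,β] → [a,b] is real analytic, then the composition h = f ∘ g belongs to the class C^#{M_j} on [α,β]. -/
open Set Filter Topology

noncomputable section

/-- `f` belongs to the class `C^#{M_j}` on `[a,b]`: there is a constant `C > 0`
with `sup_{[a,b]} |f^{(j)}| ≤ C^j M_j` for all `j ≥ 1`. -/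
def MemCSharp (M : ℕ → ℝ) (f : ℝ → ℝ) (a b : ℝ) : Prop :=
  ∃ C > 0, ∀ j : ℕ, 1 ≤ j → ∀ x ∈ Set.Icc a b, |iteratedDeriv j f x| ≤ C ^ j * M j

/-- `M` is an admissible version of the sequence `M^{(k)}_j = (j log_k j)^j`
(where `log_k` is the `k`-th iterated logarithm): positive, increasing,
logarithmically convex, and equal to `(j log_k j)^j` for all sufficiently
large `j`. -/
def IsMkSeq (k : ℕ) (M : ℕ → ℝ) : Prop :=
  (∀ j, 0 < M j) ∧ Monotone M ∧
  (∀ j : ℕ, M (j + 1) ^ 2 ≤ M j * M (j + 2)) ∧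
  ∃ J : ℕ, ∀ j ≥ J, M j = ((j : ℝ) * Real.log^[k] j) ^ j

/-- `(l+k)! ≤ l! * n^k` when `l+k ≤ n`. -/
lemma aux_factorial_le (k : ℕ) : ∀ l n : ℕ, l + k ≤ n → (l + k).factorial ≤ l.factorial * n ^ k := by
  induction k with
  | zero => intro l n _; simp
  | succ k ih =>
    intro l n h
    have h' : l + k ≤ n := by omega
    calc (l + (k+1)).factorial = (l + k + 1) * (l + k).factorial := by
          rw [show l + (k+1) = (l+k) + 1 by ring, Nat.factorial_succ]
      _ ≤ n * (l.factorial * n ^ k) := by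
          exact Nat.mul_le_mul (by omega) (ih l n h')
      _ = l.factorial * n ^ (k+1) := by ring

lemma aux_choose_factorial {j l : ℕ} (hl : l ≤ j) :
    j.choose l * ((j - l) + 1).factorial ≤ 2 ^ (j - l) * j ^ (j - l) := by
  have h1 : j.choose l * (j - l).factorial * l.factorial ≤ j ^ (j - l) * l.factorial := by
    have hid : j.choose l * l.factorial * (j - l).factorial = j.factorial :=
      Nat.choose_mul_factorial_mul_factorial hl
    have h2 : j.factorial ≤ l.factorial * j ^ (j - l) := by
      have := aux_factorial_le (j - l) l j (by omega)
      rwa [Nat.add_sub_cancel' hl] at this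
    calc j.choose l * (j - l).factorial * l.factorial
        = j.choose l * l.factorial * (j - l).factorial := by ring
      _ = j.factorial := hid
      _ ≤ l.factorial * j ^ (j - l) := h2
      _ = j ^ (j - l) * l.factorial := by ring
  have h3 : j.choose l * (j - l).factorial ≤ j ^ (j - l) :=
    Nat.le_of_mul_le_mul_right h1 (Nat.factorial_pos l)
  have h4 : (j - l) + 1 ≤ 2 ^ (j - l) := Nat.lt_two_pow_self
  calc j.choose l * ((j - l) + 1).factorial
      = ((j - l) + 1) * (j.choose l * (j - l).factorial) := by
        rw [Nat.factorial_succ]; ring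
    _ ≤ 2 ^ (j - l) * (j ^ (j - l)) := Nat.mul_le_mul h4 h3
    _ = 2 ^ (j - l) * j ^ (j - l) := rfl

lemma abs_iteratedDeriv_eq (n : ℕ) (h : ℝ → ℝ) (x : ℝ) :
    |iteratedDeriv n h x| = ‖iteratedFDeriv ℝ n h x‖ := by
  rw [← Real.norm_eq_abs, iteratedDeriv_eq_equiv_comp, Function.comp_apply,
    LinearIsometryEquiv.norm_map]

/-- Local Cauchy estimates near a point of analyticity. -/
lemma aux_local_cauchy {g : ℝ → ℝ} {y : ℝ} (hy : AnalyticAt ℝ g y) :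
    ∃ ε > (0:ℝ), ∃ A R : ℝ, 1 ≤ A ∧ 1 ≤ R ∧
      ∀ k : ℕ, ∀ x ∈ Metric.ball y ε,
        |iteratedDeriv k g x| ≤ A * k.factorial * R ^ k := by
  obtain ⟨p, hpa⟩ := hy
  obtain ⟨r, hp⟩ := hpa
  obtain ⟨t, ht0, htr⟩ := ENNReal.lt_iff_exists_nnreal_btwn.1 hp.r_pos
  have ht0' : 0 < t := by exact_mod_cast ht0
  have ht0r : (0:ℝ) < (t:ℝ) := ht0'
  have htrad : (t : ENNReal) < p.radius := htr.trans_le hp.r_le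
  obtain ⟨C₀, hC₀pos, hC₀⟩ := p.norm_mul_pow_le_of_lt_radius htrad
  set D : NNReal := C₀.toNNReal with hD
  have hDC : (D : ℝ) = C₀ := Real.coe_toNNReal _ hC₀pos.le
  have hCn : ∀ n : ℕ, ‖p n‖₊ * t ^ n ≤ D := by
    intro n
    rw [← NNReal.coe_le_coe]
    push_cast [hDC]
    exact hC₀ n
  -- coefficient bound after change of origin
  have key : ∀ z : ℝ, ‖z‖₊ ≤ t / 4 → ∀ k : ℕ,
      ‖p.changeOrigin z k‖₊ ≤ 2 * D * (2 * t⁻¹) ^ k := by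
    intro z hz4 k
    have hzt : ‖z‖₊ < t := lt_of_le_of_lt hz4 (by
      rw [← NNReal.coe_lt_coe]
      push_cast
      linarith)
    have hzrad : (‖z‖₊ : ENNReal) < p.radius := lt_of_lt_of_le
      (by exact_mod_cast hzt) (le_of_lt htrad)
    have h1 := p.nnnorm_changeOrigin_le (x := z) k hzrad
    set u : (Σ l : ℕ, { s : Finset (Fin (k + l)) // s.card = l }) → NNReal :=
      fun s => ‖p (k + s.1)‖₊ * ‖z‖₊ ^ s.1 with hu
    have h2 : ((∑' s, u s : NNReal) : ENNReal) ≤ ∑' s, (u s : ENNReal) := by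
      by_cases hsum : Summable u
      · rw [ENNReal.coe_tsum hsum]
      · rw [tsum_eq_zero_of_not_summable hsum]; simp
    -- per-element bound
    have helem : ∀ (l : ℕ) (s : { s : Finset (Fin (k + l)) // s.card = l }),
        u ⟨l, s⟩ ≤ D * (t⁻¹) ^ k * (4⁻¹ : NNReal) ^ l := by
      intro l s
      have hp' : ‖p (k + l)‖₊ ≤ D * (t⁻¹) ^ (k + l) := by
        have h := hCn (k + l)
        rw [← NNReal.coe_le_coe] at h ⊢
        push_cast at h ⊢
        rw [inv_pow, ← div_eq_mul_inv, le_div_iff₀ (by positivity)]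
        exact h
      have hz' : ‖z‖₊ ^ l ≤ (t/4) ^ l := pow_le_pow_left' hz4 l
      calc u ⟨l, s⟩ = ‖p (k + l)‖₊ * ‖z‖₊ ^ l := rfl
        _ ≤ (D * (t⁻¹) ^ (k + l)) * (t/4) ^ l := mul_le_mul' hp' hz'
        _ = D * (t⁻¹) ^ k * (4⁻¹ : NNReal) ^ l * ((t⁻¹ * t) ^ l) := by
            rw [pow_add, div_eq_mul_inv, mul_pow, mul_pow]
            ring
        _ = D * (t⁻¹) ^ k * (4⁻¹ : NNReal) ^ l := by
            rw [inv_mul_cancel₀ ht0'.ne', one_pow, mul_one]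
    -- fiber cardinality
    have hcard : ∀ l : ℕ, (Fintype.card { s : Finset (Fin (k + l)) // s.card = l }) ≤ 2 ^ (k + l) := by
      intro l
      calc Fintype.card { s : Finset (Fin (k + l)) // s.card = l }
          ≤ Fintype.card (Finset (Fin (k + l))) := Fintype.card_subtype_le _
        _ = 2 ^ (k + l) := by rw [Fintype.card_finset, Fintype.card_fin]
    -- fiber sum bound in ℝ≥0∞
    have hfiber : ∀ l : ℕ, (∑' s : { s : Finset (Fin (k + l)) // s.card = l }, (u ⟨l, s⟩ : ENNReal))
        ≤ (((2 ^ (k+l) * (D * (t⁻¹) ^ k * (4⁻¹ : NNReal) ^ l)) : NNReal) : ENNReal) := by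
      intro l
      rw [tsum_fintype]
      calc ∑ s : { s : Finset (Fin (k + l)) // s.card = l }, (u ⟨l, s⟩ : ENNReal)
          ≤ (Fintype.card { s : Finset (Fin (k + l)) // s.card = l }) •
              ((D * (t⁻¹) ^ k * (4⁻¹ : NNReal) ^ l : NNReal) : ENNReal) := by
            apply Finset.sum_le_card_nsmul
            intro s _
            exact_mod_cast ENNReal.coe_le_coe.2 (helem l s)
        _ = (Fintype.card { s : Finset (Fin (k + l)) // s.card = l } : ENNReal) *
              ((D * (t⁻¹) ^ k * (4⁻¹ : NNReal) ^ l : NNReal) : ENNReal) := by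
            rw [nsmul_eq_mul]
        _ ≤ ((2:ℕ) ^ (k + l) : ENNReal) * ((D * (t⁻¹) ^ k * (4⁻¹ : NNReal) ^ l : NNReal) : ENNReal) := by
            apply mul_le_mul_left
            exact_mod_cast Nat.cast_le.2 (hcard l)
        _ = _ := by push_cast; ring
    have hsimp : ∀ l : ℕ, ((2:NNReal) ^ (k+l) * (D * (t⁻¹) ^ k * (4⁻¹ : NNReal) ^ l))
        = (2 ^ k * D * t⁻¹ ^ k) * (2⁻¹ : NNReal) ^ l := by
      intro l
      rw [pow_add, ← NNReal.coe_inj]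
      push_cast
      have h24 : ((2:ℝ)⁻¹)^l = (2:ℝ)^l * ((4:ℝ)⁻¹)^l := by rw [← mul_pow]; norm_num
      rw [h24]; ring
    have htotal : (‖p.changeOrigin z k‖₊ : ENNReal) ≤ ((2 * D * (2 * t⁻¹) ^ k : NNReal) : ENNReal) := by
      calc (‖p.changeOrigin z k‖₊ : ENNReal)
          ≤ ((∑' s, u s : NNReal) : ENNReal) := ENNReal.coe_le_coe.2 h1
        _ ≤ ∑' s, (u s : ENNReal) := h2
        _ = ∑' l : ℕ, ∑' s : { s : Finset (Fin (k + l)) // s.card = l }, (u ⟨l, s⟩ : ENNReal) :=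
            ENNReal.tsum_sigma' _
        _ ≤ ∑' l : ℕ, (((2 ^ (k+l) * (D * (t⁻¹) ^ k * (4⁻¹ : NNReal) ^ l)) : NNReal) : ENNReal) :=
            ENNReal.tsum_le_tsum hfiber
        _ = ∑' l : ℕ, (((2 ^ k * D * t⁻¹ ^ k : NNReal) : ENNReal) * (((2⁻¹:NNReal)) : ENNReal) ^ l) := by
            congr 1
            funext l
            rw [hsimp l]
            push_cast
            ring
        _ = ((2 ^ k * D * t⁻¹ ^ k : NNReal) : ENNReal) * ∑' l : ℕ, (((2⁻¹:NNReal)) : ENNReal) ^ l :=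
            ENNReal.tsum_mul_left
        _ = ((2 ^ k * D * t⁻¹ ^ k : NNReal) : ENNReal) * 2 := by
            rw [show (((2⁻¹ : NNReal)) : ENNReal) = 2⁻¹ by push_cast; rfl]
            rw [ENNReal.tsum_geometric, ENNReal.one_sub_inv_two, inv_inv]
        _ = ((2 * D * (2 * t⁻¹) ^ k : NNReal) : ENNReal) := by
            push_cast
            ring
    exact ENNReal.coe_le_coe.1 htotal
  -- now derive derivative bounds on the ball
  refine ⟨(t:ℝ)/4, by positivity, max 1 (2*C₀), max 1 (2/(t:ℝ)), le_max_left _ _, le_max_left _ _,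
    ?_⟩
  intro k x hxball
  have hznn : ‖x - y‖₊ ≤ t / 4 := by
    rw [← NNReal.coe_le_coe]
    push_cast
    rw [Real.norm_eq_abs]
    have := Metric.mem_ball.1 hxball
    rw [Real.dist_eq] at this
    linarith
  have hzr : (‖x - y‖₊ : ENNReal) < r := by
    refine lt_of_le_of_lt ?_ htr
    refine ENNReal.coe_le_coe.2 (le_trans hznn ?_)
    rw [← NNReal.coe_le_coe]
    push_cast
    linarith
  have hq := hp.changeOrigin hzr
  rw [show y + (x - y) = x by ring] at hq
  set q := p.changeOrigin (x - y) with hqdef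
  -- |iteratedDeriv k g x| ≤ k! * ‖q k‖
  have hfact := hq.factorial_smul (1:ℝ) k
  have hval : iteratedDeriv k g x = k.factorial • (q k fun _ => (1:ℝ)) := by
    rw [iteratedDeriv_eq_iteratedFDeriv, ← hfact]
  have hbound : |iteratedDeriv k g x| ≤ (k.factorial : ℝ) * ‖q k‖ := by
    rw [hval]
    rw [← Real.norm_eq_abs, nsmul_eq_mul, norm_mul]
    simp only [Real.norm_natCast]
    apply mul_le_mul_of_nonneg_left _ (by positivity)
    calc ‖q k fun _ => (1:ℝ)‖ ≤ ‖q k‖ * ∏ _i : Fin k, ‖(1:ℝ)‖ := (q k).le_opNorm _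
      _ = ‖q k‖ := by simp
  have hqk : ‖q k‖ ≤ 2 * C₀ * (2 / (t:ℝ)) ^ k := by
    have h := key (x - y) hznn k
    rw [← NNReal.coe_le_coe] at h
    push_cast [hDC] at h
    calc ‖q k‖ = (‖q k‖₊ : ℝ) := (coe_nnnorm _).symm
      _ ≤ 2 * C₀ * (2 * (t:ℝ)⁻¹) ^ k := h
      _ = 2 * C₀ * (2 / (t:ℝ)) ^ k := by rw [div_eq_mul_inv]
  calc |iteratedDeriv k g x| ≤ (k.factorial : ℝ) * ‖q k‖ := hbound
    _ ≤ (k.factorial : ℝ) * (2 * C₀ * (2 / (t:ℝ)) ^ k) := by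
        apply mul_le_mul_of_nonneg_left hqk (by positivity)
    _ ≤ max 1 (2*C₀) * (k.factorial : ℝ) * max 1 (2/(t:ℝ)) ^ k := by
        have h1 : 2 * C₀ ≤ max 1 (2*C₀) := le_max_right _ _
        have h2 : (2/(t:ℝ)) ^ k ≤ max 1 (2/(t:ℝ)) ^ k :=
          pow_le_pow_left₀ (by positivity) (le_max_right _ _) k
        have hfk : (0:ℝ) ≤ (k.factorial : ℝ) := by positivity
        calc (k.factorial : ℝ) * (2 * C₀ * (2 / (t:ℝ)) ^ k)
            ≤ (k.factorial : ℝ) * (max 1 (2*C₀) * max 1 (2/(t:ℝ)) ^ k) := by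
              apply mul_le_mul_of_nonneg_left _ hfk
              apply mul_le_mul h1 h2 (by positivity) (by positivity)
          _ = max 1 (2*C₀) * (k.factorial : ℝ) * max 1 (2/(t:ℝ)) ^ k := by ring

lemma aux_cauchy_compact {g : ℝ → ℝ} {s : Set ℝ} (hs : IsCompact s)
    (hg : AnalyticOnNhd ℝ g s) :
    ∃ A R : ℝ, 1 ≤ A ∧ 1 ≤ R ∧
      ∀ k : ℕ, ∀ x ∈ s, |iteratedDeriv k g x| ≤ A * k.factorial * R ^ k := by
  have loc : ∀ y : s, ∃ ε > (0:ℝ), ∃ A R : ℝ, 1 ≤ A ∧ 1 ≤ R ∧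
      ∀ k : ℕ, ∀ x ∈ Metric.ball (y:ℝ) ε,
        |iteratedDeriv k g x| ≤ A * k.factorial * R ^ k :=
    fun y => aux_local_cauchy (hg y y.2)
  choose ε hε A R hA1 hR1 hloc using loc
  obtain ⟨T, hT⟩ := hs.elim_finite_subcover (fun y : s => Metric.ball (y:ℝ) (ε y))
    (fun y => Metric.isOpen_ball)
    (fun x hx => Set.mem_iUnion.2 ⟨⟨x, hx⟩, Metric.mem_ball_self (hε ⟨x, hx⟩)⟩)
  have hsumA : (0:ℝ) ≤ ∑ j ∈ T, |A j| := Finset.sum_nonneg (fun j _ => abs_nonneg _)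
  have hsumR : (0:ℝ) ≤ ∑ j ∈ T, |R j| := Finset.sum_nonneg (fun j _ => abs_nonneg _)
  refine ⟨1 + ∑ i ∈ T, |A i|, 1 + ∑ i ∈ T, |R i|, by linarith, by linarith, ?_⟩
  intro k x hx
  obtain ⟨i, hiT, hxball⟩ := Set.mem_iUnion₂.1 (hT hx)
  have hAb : A i ≤ 1 + ∑ j ∈ T, |A j| := by
    have : |A i| ≤ ∑ j ∈ T, |A j| := Finset.single_le_sum (f := fun j => |A j|) (fun j _ => abs_nonneg _) hiT
    calc A i ≤ |A i| := le_abs_self _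
      _ ≤ ∑ j ∈ T, |A j| := this
      _ ≤ 1 + ∑ j ∈ T, |A j| := by linarith
  have hRb : R i ≤ 1 + ∑ j ∈ T, |R j| := by
    have : |R i| ≤ ∑ j ∈ T, |R j| := Finset.single_le_sum (f := fun j => |R j|) (fun j _ => abs_nonneg _) hiT
    calc R i ≤ |R i| := le_abs_self _
      _ ≤ ∑ j ∈ T, |R j| := this
      _ ≤ 1 + ∑ j ∈ T, |R j| := by linarith
  calc |iteratedDeriv k g x| ≤ A i * k.factorial * R i ^ k := hloc i k x hxball
    _ ≤ (1 + ∑ j ∈ T, |A j|) * k.factorial * (1 + ∑ j ∈ T, |R j|) ^ k := by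
        apply mul_le_mul
        · exact mul_le_mul_of_nonneg_right hAb (by positivity)
        · exact pow_le_pow_left₀ (by linarith [hR1 i]) hRb k
        · exact pow_nonneg (by linarith [hR1 i]) k
        · have := hA1 i
          have hfk : (0:ℝ) ≤ (k.factorial:ℝ) := by positivity
          nlinarith

/-- Lemma (composition with real analytic maps): if `j ↦ M_j^{1/j}` is
increasing with `M_j^{1/j} > j`, `f ∈ C^#{M_j}` on `[a,b]`, and
`g : [α,β] → [a,b]` is real analytic, then `f ∘ g ∈ C^#{M_j}` on `[α,β]`. -/
theorem memCSharp_comp_analytic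
    (M : ℕ → ℝ) (hpos : ∀ j, 1 ≤ j → 0 < M j)
    (hgt : ∀ j : ℕ, 1 ≤ j → (j : ℝ) < M j ^ ((j : ℝ)⁻¹))
    (hmono : ∀ i j : ℕ, 1 ≤ i → i ≤ j → M i ^ ((i : ℝ)⁻¹) ≤ M j ^ ((j : ℝ)⁻¹))
    (a b α β : ℝ) (hab : a ≤ b) (hαβ : α ≤ β)
    (f : ℝ → ℝ) (hf : ContDiff ℝ (⊤ : ℕ∞) f) (hfM : MemCSharp M f a b)
    (g : ℝ → ℝ) (hg : AnalyticOnNhd ℝ g (Set.Icc α β))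
    (hmaps : ∀ x ∈ Set.Icc α β, g x ∈ Set.Icc a b) :
    MemCSharp M (f ∘ g) α β := by
  obtain ⟨C0, hC0pos, hC0⟩ := hfM
  obtain ⟨K, hK⟩ := (isCompact_Icc : IsCompact (Icc a b)).exists_bound_of_continuousOn
    (hf.continuous.continuousOn)
  obtain ⟨A, R, hA1, hR1, hAR⟩ := aux_cauchy_compact isCompact_Icc hg
  set U : Set ℝ := {x | AnalyticAt ℝ g x} with hUdef
  have hUopen : IsOpen U := isOpen_analyticAt ℝ g
  have hsU : Icc α β ⊆ U := fun x hx => hg x hx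
  have hgU : AnalyticOnNhd ℝ g U := fun x hx => hx
  have hf' : ContDiff ℝ ((⊤:ℕ∞) : WithTop ℕ∞) f := hf.of_le (by simp)
  set c : ℝ := max C0 1 with hcdef
  set K' : ℝ := max K 1 with hK'def
  set Fc : ℝ := max (4*R) (2*c*A*R) with hFcdef
  have hc1 : 1 ≤ c := le_max_right _ _
  have hc0 : (0:ℝ) < c := lt_of_lt_of_le one_pos hc1
  have hK'1 : 1 ≤ K' := le_max_right _ _
  have hK'0 : (0:ℝ) < K' := lt_of_lt_of_le one_pos hK'1
  have hA0 : (0:ℝ) < A := lt_of_lt_of_le one_pos hA1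
  have hR0 : (0:ℝ) < R := lt_of_lt_of_le one_pos hR1
  have hFc4R : 4*R ≤ Fc := le_max_left _ _
  have hFc2cAR : 2*c*A*R ≤ Fc := le_max_right _ _
  have hFc1 : 1 ≤ Fc := by
    have : (1:ℝ) ≤ 4*R := by linarith
    linarith
  have hFc0 : (0:ℝ) < Fc := lt_of_lt_of_le one_pos hFc1
  -- smoothness helpers
  have hFi_cd : ∀ i : ℕ, ContDiff ℝ ((⊤:ℕ∞) : WithTop ℕ∞) (iteratedDeriv i f) := by
    intro i
    rw [iteratedDeriv_eq_iterate]
    exact ContDiff.iterate_deriv i hf'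
  have hg_cd : ContDiffOn ℝ ((⊤:ℕ∞) : WithTop ℕ∞) g U := fun y hy =>
    (AnalyticAt.contDiffAt hy).contDiffWithinAt
  have hψ_cd : ContDiffOn ℝ ((⊤:ℕ∞) : WithTop ℕ∞) (deriv g) U := fun y hy =>
    (AnalyticAt.contDiffAt (hgU.deriv y hy)).contDiffWithinAt
  refine ⟨K' * Fc, by positivity, ?_⟩
  intro N hN x hx
  set m : ℝ := M N ^ ((N:ℝ)⁻¹) with hmdef
  have hMN0 : 0 < M N := hpos N hN
  have hm0 : 0 < m := Real.rpow_pos_of_pos hMN0 _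
  have hmN : (N:ℝ) < m := hgt N hN
  have hN1 : (1:ℝ) ≤ (N:ℝ) := by exact_mod_cast hN
  have hm1 : (1:ℝ) ≤ m := le_trans hN1 hmN.le
  have hNne : ((N:ℝ)) ≠ 0 := by positivity
  have hmpowN : m ^ N = M N := by
    have h2 : M N ^ ((N:ℝ)⁻¹ * (N:ℝ)) = m ^ ((N:ℝ)) := Real.rpow_mul hMN0.le _ _
    rw [inv_mul_cancel₀ hNne, Real.rpow_one] at h2
    rw [← Real.rpow_natCast m N, ← h2]
  have hmi : ∀ i : ℕ, 1 ≤ i → i ≤ N → M i ≤ m ^ i := by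
    intro i hi1 hiN
    have hMi0 : 0 < M i := hpos i hi1
    have hle : M i ^ ((i:ℝ)⁻¹) ≤ m := hmono i N hi1 hiN
    have hine : ((i:ℝ)) ≠ 0 := by positivity
    have h2 : M i ^ ((i:ℝ)⁻¹ * (i:ℝ)) = (M i ^ ((i:ℝ)⁻¹)) ^ ((i:ℝ)) := Real.rpow_mul hMi0.le _ _
    rw [inv_mul_cancel₀ hine, Real.rpow_one] at h2
    calc M i = (M i ^ ((i:ℝ)⁻¹)) ^ ((i:ℝ)) := h2
      _ = (M i ^ ((i:ℝ)⁻¹)) ^ (i:ℕ) := Real.rpow_natCast _ i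
      _ ≤ m ^ i := pow_le_pow_left₀ (Real.rpow_nonneg hMi0.le _) hle i
  -- key induction
  have key : ∀ j i : ℕ, i + j ≤ N → ∀ z ∈ Icc α β,
      |iteratedDeriv j ((iteratedDeriv i f) ∘ g) z| ≤ K' * c ^ i * Fc ^ j * m ^ (i + j) := by
    intro j
    induction j using Nat.strong_induction_on with
    | _ j IH =>
      match j, IH with
      | 0, _ =>
        intro i hiN z hz
        rw [iteratedDeriv_zero, Function.comp_apply]
        rcases Nat.eq_zero_or_pos i with hi0 | hi1
        · subst hi0
          rw [iteratedDeriv_zero]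
          have h1 := hK (g z) (hmaps z hz)
          rw [Real.norm_eq_abs] at h1
          simp only [pow_zero, Nat.add_zero, mul_one, one_mul]
          calc |f (g z)| ≤ K := h1
            _ ≤ K' := le_max_left _ _
        · have h1 := hC0 i hi1 (g z) (hmaps z hz)
          have h2 : C0 ^ i ≤ c ^ i := pow_le_pow_left₀ hC0pos.le (le_max_left _ _) i
          have h3 : M i ≤ m ^ i := hmi i hi1 (by omega)
          simp only [pow_zero, Nat.add_zero, mul_one]
          calc |iteratedDeriv i f (g z)| ≤ C0 ^ i * M i := h1
            _ ≤ c ^ i * m ^ i := by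
                apply mul_le_mul h2 h3 (hpos i hi1).le (by positivity)
            _ ≤ K' * c ^ i * m ^ i := by
                have hmm := mul_pos (pow_pos hc0 i) (pow_pos hm0 i)
                nlinarith [hmm, hK'1]
      | (j+1), IH =>
        intro i hiN z hz
        have hzU : z ∈ U := hsU hz
        -- rewrite as j-th derivative of a product
        have heq : iteratedDeriv (j+1) ((iteratedDeriv i f) ∘ g) z
            = iteratedDeriv j (fun y => ((iteratedDeriv (i+1) f) ∘ g) y * deriv g y) z := by
          rw [iteratedDeriv_succ']
          apply Filter.EventuallyEq.iteratedDeriv_eq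
          filter_upwards [hUopen.mem_nhds hzU] with y hy
          have hgy : HasDerivAt g (deriv g y) y :=
            (AnalyticAt.differentiableAt hy).hasDerivAt
          have hFd : DifferentiableAt ℝ (iteratedDeriv i f) (g y) :=
            ((hFi_cd i).differentiable (by simp)) (g y)
          have hF : HasDerivAt (iteratedDeriv i f) (iteratedDeriv (i+1) f (g y)) (g y) := by
            rw [iteratedDeriv_succ]
            exact hFd.hasDerivAt
          exact (hF.comp y hgy).deriv
        rw [heq]
        -- Leibniz rule bound
        have hφ : ContDiffOn ℝ ((⊤:ℕ∞) : WithTop ℕ∞) ((iteratedDeriv (i+1) f) ∘ g) U :=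
          (hFi_cd (i+1)).comp_contDiffOn hg_cd
        have hmul := norm_iteratedFDerivWithin_mul_le (𝕜 := ℝ)
          hφ hψ_cd hUopen.uniqueDiffOn hzU (n := j) (by exact_mod_cast le_top)
        have habs : |iteratedDeriv j (fun y => ((iteratedDeriv (i+1) f) ∘ g) y * deriv g y) z|
            = ‖iteratedFDerivWithin ℝ j (fun y => ((iteratedDeriv (i+1) f) ∘ g) y * deriv g y) U z‖ := by
          rw [abs_iteratedDeriv_eq, (iteratedFDerivWithin_of_isOpen j hUopen) hzU]
        rw [habs]
        -- bound each summand
        have hterm : ∀ l ∈ Finset.range (j+1),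
            (j.choose l : ℝ) * ‖iteratedFDerivWithin ℝ l ((iteratedDeriv (i+1) f) ∘ g) U z‖ *
              ‖iteratedFDerivWithin ℝ (j-l) (deriv g) U z‖
            ≤ (K' * c ^ i * (c*A*R) * m ^ (i + (j+1))) * (Fc ^ j * ((1:ℝ)/2) ^ (j-l)) := by
          intro l hl
          have hlj : l ≤ j := by
            have := Finset.mem_range.1 hl; omega
          have hX : ‖iteratedFDerivWithin ℝ l ((iteratedDeriv (i+1) f) ∘ g) U z‖
              ≤ K' * c ^ (i+1) * Fc ^ l * m ^ ((i+1) + l) := by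
            rw [(iteratedFDerivWithin_of_isOpen l hUopen) hzU, ← abs_iteratedDeriv_eq]
            exact IH l (by omega) (i+1) (by omega) z hz
          have hY : ‖iteratedFDerivWithin ℝ (j-l) (deriv g) U z‖
              ≤ A * ((j-l)+1).factorial * R ^ ((j-l)+1) := by
            rw [(iteratedFDerivWithin_of_isOpen (j-l) hUopen) hzU, ← abs_iteratedDeriv_eq]
            rw [← iteratedDeriv_succ']
            exact hAR ((j-l)+1) z hz
          -- combinatorial bound
          have hcomb : (j.choose l : ℝ) * ((j-l)+1).factorial ≤ 2 ^ (j-l) * m ^ (j-l) := by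
            have h1 : ((j.choose l * ((j-l)+1).factorial : ℕ) : ℝ)
                ≤ ((2 ^ (j-l) * j ^ (j-l) : ℕ) : ℝ) := by
              exact_mod_cast aux_choose_factorial hlj
            push_cast at h1
            have h2 : ((j:ℝ)) ^ (j-l) ≤ m ^ (j-l) := by
              apply pow_le_pow_left₀ (by positivity)
              have : (j:ℝ) ≤ (N:ℝ) := by exact_mod_cast (by omega : j ≤ N)
              linarith
            calc (j.choose l : ℝ) * ((j-l)+1).factorial ≤ 2 ^ (j-l) * (j:ℝ) ^ (j-l) := h1
              _ ≤ 2 ^ (j-l) * m ^ (j-l) := by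
                  apply mul_le_mul_of_nonneg_left h2 (by positivity)
          -- assemble
          set q : ℕ := j - l with hq
          have hlq : l + q = j := by omega
          have hXb0 : (0:ℝ) ≤ K' * c ^ (i+1) * Fc ^ l * m ^ ((i+1) + l) := by positivity
          have hY0 : (0:ℝ) ≤ ‖iteratedFDerivWithin ℝ (j-l) (deriv g) U z‖ := norm_nonneg _
          calc (j.choose l : ℝ) * ‖iteratedFDerivWithin ℝ l ((iteratedDeriv (i+1) f) ∘ g) U z‖ *
                ‖iteratedFDerivWithin ℝ (j-l) (deriv g) U z‖
              ≤ (j.choose l : ℝ) * (K' * c ^ (i+1) * Fc ^ l * m ^ ((i+1) + l)) *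
                (A * (q+1).factorial * R ^ (q+1)) := by
                apply mul_le_mul
                · exact mul_le_mul_of_nonneg_left hX (by positivity)
                · exact hY
                · exact hY0
                · positivity
            _ = (K' * c ^ i * (c*A*R)) * (Fc ^ l * m ^ ((i+1)+l)) *
                  ((j.choose l : ℝ) * (q+1).factorial) * R ^ q := by
                rw [pow_succ c i, pow_succ R q]
                ring
            _ ≤ (K' * c ^ i * (c*A*R)) * (Fc ^ l * m ^ ((i+1)+l)) *
                  ((2:ℝ) ^ q * m ^ q) * R ^ q := by
                apply mul_le_mul_of_nonneg_right _ (by positivity)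
                apply mul_le_mul_of_nonneg_left hcomb (by positivity)
            _ = (K' * c ^ i * (c*A*R) * (m ^ ((i+1)+l) * m ^ q)) * (Fc ^ l * (2*R) ^ q) := by
                rw [mul_pow]
                ring
            _ = (K' * c ^ i * (c*A*R) * m ^ (i + (j+1))) * (Fc ^ l * (2*R) ^ q) := by
                rw [← pow_add, show (i+1)+l+q = i+(j+1) by omega]
            _ ≤ (K' * c ^ i * (c*A*R) * m ^ (i + (j+1))) * (Fc ^ l * (Fc * (1/2)) ^ q) := by
                apply mul_le_mul_of_nonneg_left _ (by positivity)
                apply mul_le_mul_of_nonneg_left _ (by positivity)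
                apply pow_le_pow_left₀ (by positivity)
                linarith
            _ = (K' * c ^ i * (c*A*R) * m ^ (i + (j+1))) * (Fc ^ (l+q) * (1/2) ^ q) := by
                rw [mul_pow, pow_add]
                ring
            _ = (K' * c ^ i * (c*A*R) * m ^ (i + (j+1))) * (Fc ^ j * ((1:ℝ)/2) ^ q) := by
                rw [hlq]
        calc ‖iteratedFDerivWithin ℝ j (fun y => ((iteratedDeriv (i+1) f) ∘ g) y * deriv g y) U z‖
            ≤ ∑ l ∈ Finset.range (j+1), (j.choose l : ℝ) *
                ‖iteratedFDerivWithin ℝ l ((iteratedDeriv (i+1) f) ∘ g) U z‖ *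
                ‖iteratedFDerivWithin ℝ (j-l) (deriv g) U z‖ := hmul
          _ ≤ ∑ l ∈ Finset.range (j+1),
                (K' * c ^ i * (c*A*R) * m ^ (i + (j+1))) * (Fc ^ j * ((1:ℝ)/2) ^ (j-l)) :=
              Finset.sum_le_sum hterm
          _ = (K' * c ^ i * (c*A*R) * m ^ (i + (j+1)) * Fc ^ j) *
                ∑ l ∈ Finset.range (j+1), ((1:ℝ)/2) ^ (j-l) := by
              rw [Finset.mul_sum]
              exact Finset.sum_congr rfl fun l _ => by ring
          _ ≤ (K' * c ^ i * (c*A*R) * m ^ (i + (j+1)) * Fc ^ j) * 2 := by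
              apply mul_le_mul_of_nonneg_left _ (by positivity)
              have hrefl : ∑ l ∈ Finset.range (j+1), ((1:ℝ)/2) ^ (j-l)
                  = ∑ k ∈ Finset.range (j+1), ((1:ℝ)/2) ^ k := by
                rw [← Finset.sum_range_reflect]
                exact Finset.sum_congr rfl fun l hl => by
                  have := Finset.mem_range.1 hl
                  congr 1
                  omega
              rw [hrefl]
              exact sum_geometric_two_le _
          _ = (K' * c ^ i * m ^ (i + (j+1)) * Fc ^ j) * (2*c*A*R) := by ring
          _ ≤ (K' * c ^ i * m ^ (i + (j+1)) * Fc ^ j) * Fc := by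
              apply mul_le_mul_of_nonneg_left hFc2cAR (by positivity)
          _ = K' * c ^ i * Fc ^ (j+1) * m ^ (i + (j+1)) := by
              rw [pow_succ]
              ring
  have hfin := key N 0 (by omega) x hx
  rw [iteratedDeriv_zero] at hfin
  calc |iteratedDeriv N (f ∘ g) x| ≤ K' * c ^ 0 * Fc ^ N * m ^ (0 + N) := hfin
    _ = K' * Fc ^ N * M N := by
        rw [pow_zero, Nat.zero_add, hmpowN]
        ring
    _ ≤ (K' * Fc) ^ N * M N := by
        apply mul_le_mul_of_nonneg_right _ hMN0.le
        rw [mul_pow]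
        have h1 : K' ≤ K' ^ N := le_self_pow₀ hK'1 (by omega)
        exact mul_le_mul_of_nonneg_right h1 (by positivity)
end
end

section
/- Let G and H be real-valued real analytic functions defined on open intervals about θ_0 and 0 respectively. Assume that the vanishing order k of G - G(θ_0) at θ_0 is finite (1 ≤ k < ∞), and that H(t_j) = G(θ_j) for sequences t_j > 0 with t_j → 0 and θ_j → θ_0. Then there exist a real analytic function h defined on an open interval about 0 and a subsequence {j_n} such that θ_{j_n} = h(t_{j_n}^{1/k}) for all n. -/
open Set Filter Topology

/-!
Write `g = G - G θ₀ = (θ - θ₀)^k u` with `u θ₀ ≠ 0`. Then `F θ = (θ - θ₀) |u θ|^{1/k}` is an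
analytic local diffeomorphism at `θ₀` with `|F| = |g|^{1/k}`, so `θ = F⁻¹(± |g θ|^{1/k})`.
On the other side, `H - G θ₀ = τ^m w` with `m ≥ 1` (or it vanishes identically), so
`|H(x^k) - G θ₀|^{1/k} = x^m |w(x^k)|^{1/k}` is analytic in `x`. Evaluating both at
`x = t_j^{1/k}` gives `θ_j = F⁻¹(± P(t_j^{1/k}))`, and one of the two signs occurs infinitely often.
-/

namespace AnalyticAt

variable {f : ℝ → ℝ} {x : ℝ}

lemma rpow_const_of_pos (hf : AnalyticAt ℝ f x) (hx : 0 < f x) (r : ℝ) :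
    AnalyticAt ℝ (fun y => f y ^ r) x := by
  refine ((hf.log hx).mul (analyticAt_const (v := r))).rexp'.congr ?_
  filter_upwards [hf.continuousAt.eventually (lt_mem_nhds hx)] with y hy
  simp [Real.rpow_def_of_pos hy]

lemma abs_of_ne_zero (hf : AnalyticAt ℝ f x) (hx : f x ≠ 0) :
    AnalyticAt ℝ (fun y => |f y|) x := by
  rcases hx.lt_or_gt with hneg | hpos
  · refine hf.neg.congr ?_
    filter_upwards [hf.continuousAt.eventually (gt_mem_nhds hneg)] with y hy
    simp [abs_of_neg hy]
  · refine hf.congr ?_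
    filter_upwards [hf.continuousAt.eventually (lt_mem_nhds hpos)] with y hy
    simp [abs_of_pos hy]

lemma abs_rpow_const_of_ne_zero (hf : AnalyticAt ℝ f x) (hx : f x ≠ 0) (r : ℝ) :
    AnalyticAt ℝ (fun y => |f y| ^ r) x :=
  (hf.abs_of_ne_zero hx).rpow_const_of_pos (abs_pos.2 hx) r

end AnalyticAt

lemma abs_pow_mul_rpow_inv (a b : ℝ) {k : ℕ} (hk : k ≠ 0) :
    |a ^ k * b| ^ (k⁻¹ : ℝ) = |a| * |b| ^ (k⁻¹ : ℝ) := by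
  rw [abs_mul, abs_pow, Real.mul_rpow (by positivity) (abs_nonneg b),
    Real.pow_rpow_inv_natCast (abs_nonneg a) hk]

lemma exists_analyticAt_abs_eq_rpow_inv {g : ℝ → ℝ} {x₀ : ℝ} {k : ℕ} (hk : k ≠ 0)
    (hg : AnalyticAt ℝ g x₀) (hord : analyticOrderAt g x₀ = k) :
    ∃ F : ℝ → ℝ, AnalyticAt ℝ F x₀ ∧ F x₀ = 0 ∧ deriv F x₀ ≠ 0 ∧
      ∀ᶠ y in 𝓝 x₀, |F y| = |g y| ^ (k⁻¹ : ℝ) := by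
  obtain ⟨u, hu, hu0, hgu⟩ := hg.analyticOrderAt_eq_natCast.1 hord
  have hroot := hu.abs_rpow_const_of_ne_zero hu0 (k⁻¹ : ℝ)
  have hderiv : HasDerivAt (fun y => (y - x₀) * |u y| ^ (k⁻¹ : ℝ)) (|u x₀| ^ (k⁻¹ : ℝ)) x₀ := by
    simpa using ((hasDerivAt_id' x₀).sub_const x₀).fun_mul hroot.differentiableAt.hasDerivAt
  refine ⟨fun y => (y - x₀) * |u y| ^ (k⁻¹ : ℝ), (analyticAt_id.sub analyticAt_const).mul hroot,
    by simp, hderiv.deriv ▸ (Real.rpow_pos_of_pos (abs_pos.2 hu0) _).ne', ?_⟩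
  filter_upwards [hgu] with y hy
  rw [hy, smul_eq_mul, abs_pow_mul_rpow_inv _ _ hk, abs_mul,
    abs_of_nonneg (Real.rpow_nonneg (abs_nonneg _) _)]

lemma exists_analyticAt_eq_apply_abs_rpow_inv {g : ℝ → ℝ} {x₀ : ℝ} {k : ℕ} (hk : k ≠ 0)
    (hg : AnalyticAt ℝ g x₀) (hord : analyticOrderAt g x₀ = k) :
    ∃ Ψ : ℝ → ℝ, AnalyticAt ℝ Ψ 0 ∧ ∀ᶠ y in 𝓝 x₀,
      y = Ψ (|g y| ^ (k⁻¹ : ℝ)) ∨ y = Ψ (-|g y| ^ (k⁻¹ : ℝ)) := by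
  obtain ⟨F, hF, hF0, hF', hFg⟩ := exists_analyticAt_abs_eq_rpow_inv hk hg hord
  refine ⟨hF.hasStrictDerivAt.localInverse _ _ _ hF', hF0 ▸ hF.analyticAt_localInverse hF', ?_⟩
  filter_upwards [hF.hasStrictDerivAt.eventually_left_inverse hF', hFg] with y hinv hy
  rw [← hy]
  rcases abs_choice (F y) with h | h <;> rw [h] <;> simp [hinv]

lemma exists_analyticAt_rpow_inv_abs_comp_pow {f : ℝ → ℝ} {k : ℕ} (hk : k ≠ 0)
    (hf : AnalyticAt ℝ f 0) (hf0 : f 0 = 0) :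
    ∃ P : ℝ → ℝ, AnalyticAt ℝ P 0 ∧ P 0 = 0 ∧
      ∀ᶠ x in 𝓝[≥] 0, |f (x ^ k)| ^ (k⁻¹ : ℝ) = P x := by
  have hpow : AnalyticAt ℝ (fun x : ℝ => x ^ k) 0 := analyticAt_id.pow k
  have hcomp : Tendsto (fun x : ℝ => x ^ k) (𝓝 0) (𝓝 0) := by
    simpa [zero_pow hk] using hpow.continuousAt.tendsto
  cases hord : analyticOrderAt f 0 with
  | top =>
    refine ⟨0, analyticAt_const, rfl, ?_⟩
    filter_upwards [nhdsWithin_le_nhds (hcomp.eventually (analyticOrderAt_eq_top.1 hord))]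
      with x hx
    simp [hx, hk]
  | coe m =>
    obtain ⟨w, hw, hw0, hfw⟩ := hf.analyticOrderAt_eq_natCast.1 hord
    have hm : m ≠ 0 := by
      rintro rfl
      exact hw0 (by simpa [hf0] using hfw.self_of_nhds.symm)
    refine ⟨fun x => x ^ m * |w (x ^ k)| ^ (k⁻¹ : ℝ),
      (analyticAt_id.pow m).mul
        ((hw.abs_rpow_const_of_ne_zero hw0 _).comp_of_eq hpow (zero_pow hk)),
      by simp [hm], ?_⟩
    filter_upwards [nhdsWithin_le_nhds (hcomp.eventually hfw), self_mem_nhdsWithin]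
      with x hx (hx0 : 0 ≤ x)
    rw [hx, smul_eq_mul, sub_zero, ← pow_mul, mul_comm k m, pow_mul,
      abs_pow_mul_rpow_inv _ _ hk, abs_of_nonneg (pow_nonneg hx0 m)]

lemma exists_strictMono_eq_of_frequently {h : ℝ → ℝ} (hh : AnalyticAt ℝ h 0) {x θ : ℕ → ℝ}
    (hx : Tendsto x atTop (𝓝 0)) (hfreq : ∃ᶠ j in atTop, θ j = h (x j)) :
    ∃ ε : ℝ, 0 < ε ∧ AnalyticOnNhd ℝ h (Ioo (-ε) ε) ∧
      ∃ φ : ℕ → ℕ, StrictMono φ ∧ ∀ n, x (φ n) ∈ Ioo (-ε) ε ∧ θ (φ n) = h (x (φ n)) := by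
  obtain ⟨ε, hε, hball⟩ := Metric.eventually_nhds_iff.1 hh.eventually_analyticAt
  have hIoo : Ioo (-ε) ε = Metric.ball 0 ε := by rw [Real.ball_eq_Ioo, zero_sub, zero_add]
  refine ⟨ε, hε, fun y hy => hball (by rwa [hIoo] at hy), ?_⟩
  obtain ⟨φ, hφ, hP⟩ := extraction_of_frequently_atTop
    (hfreq.and_eventually (hx.eventually (Ioo_mem_nhds (neg_neg_iff_pos.2 hε) hε)))
  exact ⟨φ, hφ, fun n => ⟨(hP n).2, (hP n).1⟩⟩

/-- Lemma: let `G`, `H` be real analytic near `θ₀` and `0`, suppose `G - G(θ₀)`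
vanishes to finite order `k` at `θ₀`, and `H(t_j) = G(θ_j)` with `t_j > 0`,
`t_j → 0`, `θ_j → θ₀`. Then along a subsequence, `θ_{j_n} = h(t_{j_n}^{1/k})`
for some real analytic function `h` near `0`. -/
theorem analytic_reparametrization_of_preimages
    (G H : ℝ → ℝ) (θ₀ : ℝ) (δG δH : ℝ) (hδG : 0 < δG) (hδH : 0 < δH)
    (hG : AnalyticOnNhd ℝ G (Set.Ioo (θ₀ - δG) (θ₀ + δG)))
    (hH : AnalyticOnNhd ℝ H (Set.Ioo (-δH) δH))
    (k : ℕ) (hk : 1 ≤ k)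
    (hvanish : ∀ i : ℕ, 1 ≤ i → i < k →
      iteratedDeriv i (fun θ => G θ - G θ₀) θ₀ = 0)
    (hnonzero : iteratedDeriv k (fun θ => G θ - G θ₀) θ₀ ≠ 0)
    (t θ : ℕ → ℝ) (htpos : ∀ j, 0 < t j)
    (ht : Tendsto t atTop (𝓝 0)) (hθ : Tendsto θ atTop (𝓝 θ₀))
    (heq : ∀ j, H (t j) = G (θ j)) :
    ∃ (h : ℝ → ℝ) (ε : ℝ), 0 < ε ∧ AnalyticOnNhd ℝ h (Set.Ioo (-ε) ε) ∧
      ∃ φ : ℕ → ℕ, StrictMono φ ∧ ∀ n : ℕ,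
        t (φ n) ^ ((k : ℝ)⁻¹) ∈ Set.Ioo (-ε) ε ∧
        θ (φ n) = h (t (φ n) ^ ((k : ℝ)⁻¹)) := by
  have hk0 : k ≠ 0 := Nat.one_le_iff_ne_zero.1 hk
  have hGa : AnalyticAt ℝ G θ₀ := hG θ₀ ⟨by linarith, by linarith⟩
  have hHa : AnalyticAt ℝ H 0 := hH 0 ⟨neg_neg_iff_pos.2 hδH, hδH⟩
  have hord : analyticOrderAt (fun θ => G θ - G θ₀) θ₀ = k := by
    refine (analyticOrderAt_eq_nat_iff_iteratedDeriv_eq_zero (hGa.fun_sub analyticAt_const)).2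
      ⟨fun i hi => ?_, hnonzero⟩
    rcases Nat.eq_zero_or_pos i with rfl | hi0
    · simp
    · exact hvanish i hi0 hi
  obtain ⟨Ψ, hΨ, hΨG⟩ :=
    exists_analyticAt_eq_apply_abs_rpow_inv hk0 (hGa.fun_sub analyticAt_const) hord
  have hH0 : H 0 = G θ₀ := tendsto_nhds_unique
    ((hHa.continuousAt.tendsto.comp ht).congr heq) (hGa.continuousAt.tendsto.comp hθ)
  obtain ⟨P, hP, hP0, hPH⟩ := exists_analyticAt_rpow_inv_abs_comp_pow hk0
    (hHa.fun_sub analyticAt_const) (sub_eq_zero.2 hH0)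
  set x : ℕ → ℝ := fun j => t j ^ ((k : ℝ)⁻¹)
  have hx : Tendsto x atTop (𝓝[≥] 0) := by
    refine tendsto_nhdsWithin_iff.2
      ⟨?_, Eventually.of_forall fun j => Real.rpow_nonneg (htpos j).le _⟩
    simpa [Real.zero_rpow (inv_ne_zero (Nat.cast_ne_zero.2 hk0))] using
      ht.rpow_const (Or.inr (inv_nonneg.2 (Nat.cast_nonneg k)))
  have hsign : ∀ᶠ j in atTop, θ j = Ψ (P (x j)) ∨ θ j = Ψ (-P (x j)) := by
    filter_upwards [hθ.eventually hΨG, hx.eventually hPH] with j hj hPj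
    rw [Real.rpow_inv_natCast_pow (htpos j).le hk0, heq] at hPj
    rwa [hPj] at hj
  obtain ⟨c, hc⟩ : ∃ c : ℝ, ∃ᶠ j in atTop, θ j = Ψ (c * P (x j)) := by
    rcases frequently_or_distrib.1 hsign.frequently with h | h
    · exact ⟨1, by simpa using h⟩
    · exact ⟨-1, by simpa using h⟩
  have hh : AnalyticAt ℝ (fun y => Ψ (c * P y)) 0 :=
    hΨ.comp_of_eq (analyticAt_const.mul hP) (by simp [hP0])
  exact ⟨_, exists_strictMono_eq_of_frequently hh (hx.mono_right nhdsWithin_le_nhds) hc⟩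
end

section
/- Let {a_k}_{k≥1} be a sequence of real numbers with a_1 > 0 and a_1 + ⋯ + a_k < a_{k+1} for all k ≥ 1. Define maps T^k: R^k → R^{k+1} inductively by T^1(θ_1) = (a_1 sin θ_1, a_1 cos θ_1), and T^{k+1}_j = T^k_j for j = 1,…,k, T^{k+1}_{k+1}(θ_1,…,θ_{k+1}) = (T^k_{k+1}(θ_1,…,θ_k) + a_{k+1}) sin θ_{k+1}, T^{k+1}_{k+2}(θ_1,…,θ_{k+1}) = (T^k_{k+1}(θ_1,…,θ_k) + a_{k+1}) cos θ_{k+1}. Then for every k ≥ 1: |T^k_j(θ_1,…,θ_k)| ≤ a_1 + ⋯ + a_k for all j = 1,…,k+1 and all (θ_1,…,θ_k) ∈ R^k, and T^k is injective on [0,2π)^k. -/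
open Set Filter Topology

noncomputable section

/-- The inductively defined torus parametrizations: `torusParam a k` corresponds
to the map `T^{k+1} : ℝ^{k+1} → ℝ^{k+2}` of the paper (with `a i` playing the
role of `a_{i+1}`), defined by `T^1(θ₁) = (a₁ sin θ₁, a₁ cos θ₁)` and
`T^{k+1}_j = T^k_j` for `j ≤ k`,
`T^{k+1}_{k+1} = (T^k_{k+1} + a_{k+1}) sin θ_{k+1}`,
`T^{k+1}_{k+2} = (T^k_{k+1} + a_{k+1}) cos θ_{k+1}`. -/
noncomputable def torusParam (a : ℕ → ℝ) : (k : ℕ) → (Fin (k + 1) → ℝ) → Fin (k + 2) → ℝ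
  | 0, θ, i => if (i : ℕ) = 0 then a 0 * Real.sin (θ 0) else a 0 * Real.cos (θ 0)
  | k + 1, θ, i =>
    if h : (i : ℕ) < k + 1 then
      torusParam a k (fun j => θ (Fin.castSucc j)) ⟨(i : ℕ), by omega⟩
    else if (i : ℕ) = k + 1 then
      (torusParam a k (fun j => θ (Fin.castSucc j)) (Fin.last (k + 1)) + a (k + 1)) *
        Real.sin (θ (Fin.last (k + 1)))
    else
      (torusParam a k (fun j => θ (Fin.castSucc j)) (Fin.last (k + 1)) + a (k + 1)) *
        Real.cos (θ (Fin.last (k + 1)))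

lemma angle_inj {x y : ℝ} (hx : x ∈ Set.Ico 0 (2 * Real.pi)) (hy : y ∈ Set.Ico 0 (2 * Real.pi))
    (hs : Real.sin x = Real.sin y) (hc : Real.cos x = Real.cos y) : x = y := by
  have h1 : Real.cos (x - y) = 1 := by
    rw [Real.cos_sub, hs, hc]
    nlinarith [Real.sin_sq_add_cos_sq y]
  have := (Real.cos_eq_one_iff_of_lt_of_lt (by cases hx; cases hy; linarith)
    (by cases hx; cases hy; linarith)).mp h1
  linarith

lemma tp_cast (a : ℕ → ℝ) (k : ℕ) (θ : Fin (k + 2) → ℝ) (i : Fin (k + 3))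
    (h : (i : ℕ) < k + 1) :
    torusParam a (k + 1) θ i
      = torusParam a k (fun j => θ (Fin.castSucc j)) ⟨(i : ℕ), by omega⟩ := by
  show dite _ _ _ = _
  rw [dif_pos h]

lemma tp_sin (a : ℕ → ℝ) (k : ℕ) (θ : Fin (k + 2) → ℝ) (i : Fin (k + 3))
    (h : (i : ℕ) = k + 1) :
    torusParam a (k + 1) θ i
      = (torusParam a k (fun j => θ (Fin.castSucc j)) (Fin.last (k + 1)) + a (k + 1)) *
        Real.sin (θ (Fin.last (k + 1))) := by
  show dite _ _ _ = _
  rw [dif_neg (by omega), if_pos h]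

lemma tp_cos (a : ℕ → ℝ) (k : ℕ) (θ : Fin (k + 2) → ℝ) (i : Fin (k + 3))
    (h : (i : ℕ) = k + 2) :
    torusParam a (k + 1) θ i
      = (torusParam a k (fun j => θ (Fin.castSucc j)) (Fin.last (k + 1)) + a (k + 1)) *
        Real.cos (θ (Fin.last (k + 1))) := by
  show dite _ _ _ = _
  rw [dif_neg (by omega), if_neg (by omega)]

/-- If `a₁ > 0` and `a₁ + ⋯ + a_k < a_{k+1}` for all `k`, then every component
of `T^k` is bounded by `a₁ + ⋯ + a_k`, and `T^k` is injective on `[0, 2π)^k`. -/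
theorem torusParam_bounded_and_injective
    (a : ℕ → ℝ) (ha₀ : 0 < a 0)
    (hgrow : ∀ k : ℕ, ∑ i ∈ Finset.range (k + 1), a i < a (k + 1)) (k : ℕ) :
    (∀ (θ : Fin (k + 1) → ℝ) (i : Fin (k + 2)),
      |torusParam a k θ i| ≤ ∑ i ∈ Finset.range (k + 1), a i) ∧
    Set.InjOn (torusParam a k) {θ | ∀ i, θ i ∈ Set.Ico 0 (2 * Real.pi)} := by
  have hBpos : ∀ k : ℕ, 0 < ∑ i ∈ Finset.range (k + 1), a i := by
    intro k
    induction k with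
    | zero => simpa using ha₀
    | succ k ih =>
      rw [Finset.sum_range_succ]
      have := hgrow k
      linarith
  induction k with
  | zero =>
    constructor
    · intro θ i
      have hs : ∑ i ∈ Finset.range (0 + 1), a i = a 0 := by simp
      rw [hs]
      show |ite _ _ _| ≤ a 0
      split
      · calc |a 0 * Real.sin (θ 0)| = |a 0| * |Real.sin (θ 0)| := abs_mul _ _
          _ ≤ |a 0| * 1 :=
            mul_le_mul_of_nonneg_left (Real.abs_sin_le_one _) (abs_nonneg _)
          _ = a 0 := by rw [mul_one, abs_of_pos ha₀]
      · calc |a 0 * Real.cos (θ 0)| = |a 0| * |Real.cos (θ 0)| := abs_mul _ _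
          _ ≤ |a 0| * 1 :=
            mul_le_mul_of_nonneg_left (Real.abs_cos_le_one _) (abs_nonneg _)
          _ = a 0 := by rw [mul_one, abs_of_pos ha₀]
    · intro θ hθ θ' hθ' h
      have h0 := congrFun h (0 : Fin 2)
      have h1 := congrFun h (1 : Fin 2)
      have e0 : ∀ ψ : Fin 1 → ℝ, torusParam a 0 ψ (0 : Fin 2) = a 0 * Real.sin (ψ 0) := by
        intro ψ; show ite _ _ _ = _; norm_num
      have e1 : ∀ ψ : Fin 1 → ℝ, torusParam a 0 ψ (1 : Fin 2) = a 0 * Real.cos (ψ 0) := by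
        intro ψ; show ite _ _ _ = _; norm_num
      rw [e0, e0] at h0
      rw [e1, e1] at h1
      have hsE : Real.sin (θ 0) = Real.sin (θ' 0) := mul_left_cancel₀ ha₀.ne' h0
      have hcE : Real.cos (θ 0) = Real.cos (θ' 0) := mul_left_cancel₀ ha₀.ne' h1
      funext i
      have : i = 0 := Fin.ext (by omega)
      subst this
      exact angle_inj (hθ 0) (hθ' 0) hsE hcE
  | succ k ih =>
    obtain ⟨hbd, hinj⟩ := ih
    have hB : ∑ i ∈ Finset.range (k + 1), a i < a (k + 1) := hgrow k
    have hBp := hBpos k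
    constructor
    · intro θ i
      rw [Finset.sum_range_succ]
      rcases lt_or_ge (i : ℕ) (k + 1) with hi | hi
      · rw [tp_cast a k θ i hi]
        calc |torusParam a k (fun j => θ (Fin.castSucc j)) ⟨(i : ℕ), by omega⟩|
            ≤ ∑ i ∈ Finset.range (k + 1), a i := hbd _ _
          _ ≤ _ := by linarith
      · have hb := abs_le.mp (hbd (fun j => θ (Fin.castSucc j)) (Fin.last (k + 1)))
        rcases Nat.eq_or_lt_of_le hi with hi1 | hi2
        · rw [tp_sin a k θ i hi1.symm]
          calc |(torusParam a k (fun j => θ (Fin.castSucc j)) (Fin.last (k+1)) + a (k+1)) *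
                Real.sin (θ (Fin.last (k+1)))|
              ≤ |torusParam a k (fun j => θ (Fin.castSucc j)) (Fin.last (k+1)) + a (k+1)| * 1 := by
                rw [abs_mul]
                exact mul_le_mul_of_nonneg_left (Real.abs_sin_le_one _) (abs_nonneg _)
            _ ≤ _ := by
                rw [mul_one, abs_le]
                constructor <;> [linarith [hb.1]; linarith [hb.2]]
        · have hi2' : (i : ℕ) = k + 2 := by omega
          rw [tp_cos a k θ i hi2']
          calc |(torusParam a k (fun j => θ (Fin.castSucc j)) (Fin.last (k+1)) + a (k+1)) *
                Real.cos (θ (Fin.last (k+1)))|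
              ≤ |torusParam a k (fun j => θ (Fin.castSucc j)) (Fin.last (k+1)) + a (k+1)| * 1 := by
                rw [abs_mul]
                exact mul_le_mul_of_nonneg_left (Real.abs_cos_le_one _) (abs_nonneg _)
            _ ≤ _ := by
                rw [mul_one, abs_le]
                constructor <;> [linarith [hb.1]; linarith [hb.2]]
    · intro θ hθ θ' hθ' h
      set ψ : Fin (k + 1) → ℝ := fun j => θ (Fin.castSucc j) with hψdef
      set ψ' : Fin (k + 1) → ℝ := fun j => θ' (Fin.castSucc j) with hψ'def
      set T := torusParam a k ψ (Fin.last (k + 1)) with hT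
      set T' := torusParam a k ψ' (Fin.last (k + 1)) with hT'
      have hTb := abs_le.mp (hbd ψ (Fin.last (k + 1)))
      have hT'b := abs_le.mp (hbd ψ' (Fin.last (k + 1)))
      have hr : 0 < T + a (k + 1) := by rw [hT]; linarith [hTb.1]
      have hr' : 0 < T' + a (k + 1) := by rw [hT']; linarith [hT'b.1]
      have hsin := congrFun h (⟨k + 1, by omega⟩ : Fin (k + 3))
      have hcos := congrFun h (⟨k + 2, by omega⟩ : Fin (k + 3))
      rw [tp_sin a k θ _ rfl, tp_sin a k θ' _ rfl] at hsin
      rw [tp_cos a k θ _ rfl, tp_cos a k θ' _ rfl] at hcos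
      rw [← hψdef, ← hψ'def, ← hT, ← hT'] at hsin hcos
      have hsq : (T + a (k+1))^2 = (T' + a (k+1))^2 := by
        have h1 := Real.sin_sq_add_cos_sq (θ (Fin.last (k+1)))
        have h2 := Real.sin_sq_add_cos_sq (θ' (Fin.last (k+1)))
        calc (T + a (k+1))^2
            = ((T + a (k+1)) * Real.sin (θ (Fin.last (k+1))))^2
              + ((T + a (k+1)) * Real.cos (θ (Fin.last (k+1))))^2 := by
              rw [mul_pow, mul_pow, ← mul_add, h1, mul_one]
          _ = ((T' + a (k+1)) * Real.sin (θ' (Fin.last (k+1))))^2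
              + ((T' + a (k+1)) * Real.cos (θ' (Fin.last (k+1))))^2 := by
              rw [hsin, hcos]
          _ = (T' + a (k+1))^2 := by rw [mul_pow, mul_pow, ← mul_add, h2, mul_one]
      have hrr : T + a (k+1) = T' + a (k+1) := by nlinarith [hsq, hr, hr']
      have hTT : T = T' := by linarith
      rw [hrr] at hsin hcos
      have hsE : Real.sin (θ (Fin.last (k+1))) = Real.sin (θ' (Fin.last (k+1))) :=
        mul_left_cancel₀ hr'.ne' hsin
      have hcE : Real.cos (θ (Fin.last (k+1))) = Real.cos (θ' (Fin.last (k+1))) :=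
        mul_left_cancel₀ hr'.ne' hcos
      have hlast : θ (Fin.last (k+1)) = θ' (Fin.last (k+1)) :=
        angle_inj (hθ _) (hθ' _) hsE hcE
      have hψeq : ψ = ψ' := by
        apply hinj (fun j => hθ _) (fun j => hθ' _)
        funext i
        rcases lt_or_ge (i : ℕ) (k + 1) with hi | hi
        · have hcf := congrFun h (⟨(i : ℕ), by omega⟩ : Fin (k + 3))
          rw [tp_cast a k θ _ hi, tp_cast a k θ' _ hi] at hcf
          rw [← hψdef, ← hψ'def] at hcf
          have hi2 : (⟨(i : ℕ), by omega⟩ : Fin (k + 2)) = i := Fin.ext rfl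
          rwa [hi2] at hcf
        · have : i = Fin.last (k + 1) := Fin.ext (by simp; omega)
          rw [this, ← hT, ← hT', hTT]
      funext i
      induction i using Fin.lastCases with
      | last => exact hlast
      | cast j => exact congrFun hψeq j
end
end

section
/- Let n ≥ 1 and let F: R^{2n-1} → R be a strictly convex real analytic function (its Hessian is positive definite at every point). Let S = {z ∈ C^n : Im z_n = F(z_1, …, z_{n-1}, Re z_n)}, where C^{n-1} × R is identified with R^{2n-1} via z_j = x_j + i y_j ↦ (x_j, y_j). Then S contains no nonconstant analytic disk: every holomorphic map φ: U → C^n on a connected open set U ⊂ C with φ(U) ⊂ S is constant. -/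
/-!
Fix `ζ₀ ∈ U`, let `p` be the real coordinates of `φ ζ₀` and `a = dF(p)`. The real-linear
functional `z ↦ a (realCoords z)` is the real part of a complex-linear functional `ℓ`. On the
graph `Im z_n = F (realCoords z)`, hence `Re (ℓ ∘ φ + i φ_n) = a ∘ q - F ∘ q` with
`q = realCoords ∘ φ`.
Since `F` lies strictly above its tangent plane at `p`, this real part of a holomorphic function
attains its maximum on `U` exactly where `q = p`, in particular at `ζ₀`. By the maximum principle
it is constant, so `q ≡ p`, and the graph equation then also pins down `Im φ_n`.
-/

open Set Filter Topology

noncomputable section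

/-- The identification `ℂⁿ ≅ ℝ^{2n}` restricted to the first `2n-1` real
coordinates `(x_1, y_1, …, x_{n-1}, y_{n-1}, x_n)`, where `z_j = x_j + i y_j`. -/
def realCoords (n : ℕ) (z : Fin n → ℂ) : Fin (2 * n - 1) → ℝ := fun i =>
  if (i : ℕ) % 2 = 0 then (z ⟨(i : ℕ) / 2, by have := i.2; omega⟩).re
  else (z ⟨(i : ℕ) / 2, by have := i.2; omega⟩).im

section StrictConvexity

variable {E : Type*} [NormedAddCommGroup E] [NormedSpace ℝ E] {F : E → ℝ}

theorem hasDerivAt_comp_add_smul {G : Type*} [NormedAddCommGroup G] [NormedSpace ℝ G]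
    {f : E → G} (hf : Differentiable ℝ f) (p v : E) (t : ℝ) :
    HasDerivAt (fun s : ℝ => f (p + s • v)) (fderiv ℝ f (p + t • v) v) t := by
  have hline : HasDerivAt (fun s : ℝ => p + s • v) v t := by
    simpa using ((hasDerivAt_id t).smul_const v).const_add p
  exact (hf _).hasFDerivAt.comp_hasDerivAt t hline

theorem strictConvexOn_univ_comp_add_smul (hF : ContDiff ℝ 2 F)
    (hconv : ∀ p v, v ≠ 0 → 0 < iteratedFDeriv ℝ 2 F p ![v, v]) (p : E) {v : E} (hv : v ≠ 0) :
    StrictConvexOn ℝ univ (fun t : ℝ => F (p + t • v)) := by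
  have hF1 : Differentiable ℝ F := hF.differentiable two_ne_zero
  have hF2 : Differentiable ℝ (fderiv ℝ F) :=
    (hF.fderiv_right (m := 1) (by norm_num)).differentiable one_ne_zero
  have hderiv : deriv (fun t : ℝ => F (p + t • v)) = fun t => fderiv ℝ F (p + t • v) v :=
    funext fun t => (hasDerivAt_comp_add_smul hF1 p v t).deriv
  refine StrictMono.strictConvexOn_univ_of_deriv
    (hF1.continuous.comp (by fun_prop)) (hderiv ▸ strictMono_of_deriv_pos fun t => ?_)
  have h2 : HasDerivAt (fun s : ℝ => fderiv ℝ F (p + s • v) v)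
      (fderiv ℝ (fderiv ℝ F) (p + t • v) v v) t :=
    (ContinuousLinearMap.apply ℝ ℝ v).hasFDerivAt.comp_hasDerivAt t
      (hasDerivAt_comp_add_smul hF2 p v t)
  rw [h2.deriv]
  simpa [iteratedFDeriv_two_apply] using hconv (p + t • v) v hv

theorem add_fderiv_sub_lt_of_iteratedFDeriv_two_pos (hF : ContDiff ℝ 2 F)
    (hconv : ∀ p v, v ≠ 0 → 0 < iteratedFDeriv ℝ 2 F p ![v, v]) {p q : E} (hpq : q ≠ p) :
    F p + fderiv ℝ F p (q - p) < F q := by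
  have h := (strictConvexOn_univ_comp_add_smul hF hconv p (sub_ne_zero.mpr hpq))
    |>.lt_slope_of_hasDerivAt (mem_univ 0) (mem_univ 1) one_pos
    (hasDerivAt_comp_add_smul (hF.differentiable two_ne_zero) p (q - p) 0)
  simp only [slope, zero_smul, add_zero, one_smul, add_sub_cancel, sub_zero, inv_one,
    smul_eq_mul, one_mul, vsub_eq_sub] at h
  linarith

end StrictConvexity

theorem Complex.eqOn_re_of_isPreconnected_of_isMaxOn_re {E : Type*} [NormedAddCommGroup E]
    [NormedSpace ℂ E] {f : E → ℂ} {U : Set E} {c : E} (hc : IsPreconnected U) (ho : IsOpen U)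
    (hd : DifferentiableOn ℂ f U) (hcU : c ∈ U) (hm : IsMaxOn (fun z => (f z).re) U c) :
    EqOn (fun z => (f z).re) (Function.const E (f c).re) U := by
  have hexp : ∀ z, ‖Complex.exp (f z)‖ = Real.exp (f z).re := fun z => Complex.norm_exp _
  have hmax : IsMaxOn (norm ∘ fun z => Complex.exp (f z)) U c := fun z hz => by
    simpa only [mem_ofPred_eq, Function.comp_apply, hexp, Real.exp_le_exp] using hm hz
  intro z hz
  simpa [hexp] using Complex.norm_eqOn_of_isPreconnected_of_isMaxOn hc ho hd.cexp hcU hmax hz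

def realCoordsCLM (n : ℕ) : (Fin n → ℂ) →L[ℝ] Fin (2 * n - 1) → ℝ :=
  ContinuousLinearMap.pi fun i =>
    let j : Fin n := ⟨(i : ℕ) / 2, by have := i.2; omega⟩
    if (i : ℕ) % 2 = 0 then Complex.reCLM.comp (ContinuousLinearMap.proj j)
    else Complex.imCLM.comp (ContinuousLinearMap.proj j)

@[simp]
theorem realCoordsCLM_apply (n : ℕ) (z : Fin n → ℂ) : realCoordsCLM n z = realCoords n z := by
  ext i
  simp only [realCoordsCLM, realCoords, ContinuousLinearMap.pi_apply]
  split_ifs <;> simp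

theorem eq_of_realCoords_eq {n : ℕ} (hn : 1 ≤ n) {z w : Fin n → ℂ}
    (hre : realCoords n z = realCoords n w)
    (him : (z ⟨n - 1, Nat.sub_one_lt_of_le hn le_rfl⟩).im =
      (w ⟨n - 1, Nat.sub_one_lt_of_le hn le_rfl⟩).im) :
    z = w := by
  funext j
  have hcoord (i : ℕ) (hi : i < 2 * n - 1) := congrFun hre ⟨i, hi⟩
  apply Complex.ext
  · simpa [realCoords, show 2 * (j : ℕ) / 2 = j by omega] using hcoord (2 * j) (by omega)
  · by_cases hj : (j : ℕ) = n - 1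
    · rwa [show j = ⟨n - 1, by omega⟩ from Fin.ext hj]
    · simpa [realCoords, show (2 * (j : ℕ) + 1) / 2 = j by omega, Nat.add_mod]
        using hcoord (2 * j + 1) (by omega)

/-- The graph `S = {z ∈ ℂⁿ : Im z_n = F(z_1, …, z_{n-1}, Re z_n)}` of a strictly
convex real analytic function `F : ℝ^{2n-1} → ℝ` contains no nonconstant
analytic disk. -/
theorem strictly_convex_graph_contains_no_disk
    (n : ℕ) (hn : 1 ≤ n)
    (F : (Fin (2 * n - 1) → ℝ) → ℝ)
    (hFan : AnalyticOnNhd ℝ F Set.univ)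
    (hFconv : ∀ (p v : Fin (2 * n - 1) → ℝ), v ≠ 0 →
      0 < iteratedFDeriv ℝ 2 F p ![v, v])
    (U : Set ℂ) (hU : IsOpen U) (hUconn : IsConnected U)
    (φ : ℂ → Fin n → ℂ) (hφ : DifferentiableOn ℂ φ U)
    (hmaps : ∀ ζ ∈ U, (φ ζ ⟨n - 1, by omega⟩).im = F (realCoords n (φ ζ))) :
    ∃ c, ∀ ζ ∈ U, φ ζ = c := by
  obtain ⟨ζ₀, hζ₀⟩ := hUconn.nonempty
  set q : ℂ → Fin (2 * n - 1) → ℝ := fun ζ => realCoords n (φ ζ)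
  set a := fderiv ℝ F (q ζ₀)
  have htangent : ∀ ζ, q ζ ≠ q ζ₀ → F (q ζ₀) + a (q ζ - q ζ₀) < F (q ζ) := fun ζ =>
    add_fderiv_sub_lt_of_iteratedFDeriv_two_pos hFan.contDiff hFconv
  let ℓ : StrongDual ℂ (Fin n → ℂ) := StrongDual.extendRCLike (a.comp (realCoordsCLM n))
  let H : ℂ → ℂ := fun ζ => ℓ (φ ζ) + Complex.I * φ ζ ⟨n - 1, by omega⟩
  have hHd : DifferentiableOn ℂ H U := by fun_prop
  have hℓ (z : Fin n → ℂ) : (ℓ z).re = a (realCoords n z) :=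
    (StrongDual.re_extendRCLike_apply (𝕜 := ℂ) _ z).trans (congrArg a (realCoordsCLM_apply n z))
  have hHre : ∀ ζ ∈ U, (H ζ).re = a (q ζ) - F (q ζ) := fun ζ hζ => by
    simp [H, hℓ, hmaps ζ hζ, q, sub_eq_add_neg]
  have hmax : IsMaxOn (fun ζ => (H ζ).re) U ζ₀ := fun ζ hζ => by
    change (H ζ).re ≤ (H ζ₀).re
    rw [hHre ζ hζ, hHre ζ₀ hζ₀]
    rcases eq_or_ne (q ζ) (q ζ₀) with h | h
    · rw [h]
    · linarith [htangent ζ h, map_sub a (q ζ) (q ζ₀)]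
  have hq : ∀ ζ ∈ U, q ζ = q ζ₀ := fun ζ hζ => by
    by_contra h
    have hconst := Complex.eqOn_re_of_isPreconnected_of_isMaxOn_re hUconn.isPreconnected hU hHd
      hζ₀ hmax hζ
    simp only [Function.const_apply, hHre ζ hζ, hHre ζ₀ hζ₀] at hconst
    linarith [htangent ζ h, map_sub a (q ζ) (q ζ₀)]
  exact ⟨φ ζ₀, fun ζ hζ => eq_of_realCoords_eq hn (hq ζ hζ)
    (by rw [hmaps ζ hζ, hmaps ζ₀ hζ₀]; exact congrArg F (hq ζ hζ))⟩
end
end
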